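/- The type B Eulerian polynomial B_n(x) = Σ_{σ ∈ B_n} x^{des_B(σ)} satisfies B_n(x) = Σ_{j=0}^{⌊n/2⌋} g(n,j) (4x)^j (1+x)^{n−2j}, where g(n,j) is the number of permutations of [n] with exactly j left peaks. -/

import Mathlib

/-- The value at (1-based) position `k` of the signed permutation determined by the
unsigned permutation `π` and the signs `ε` (with the prepended value `0` at position `0`). -/
def bval {n : ℕ} (π : Equiv.Perm (Fin n)) (ε : Fin n → Bool) (k : ℕ) : ℤ :=
  if h : 1 ≤ k ∧ k ≤ n then
    (if ε ⟨k - 1, by omega⟩ then -(((π ⟨k - 1, by omega⟩ : Fin n) : ℤ) + 1)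
     else ((π ⟨k - 1, by omega⟩ : Fin n) : ℤ) + 1)
  else 0

/-- number of descents at even positions `i ∈ {0,…,n-1}` of a signed permutation -/
def bdes0 {n : ℕ} (π : Equiv.Perm (Fin n)) (ε : Fin n → Bool) : ℕ :=
  ((Finset.range n).filter (fun i => i % 2 = 0 ∧ bval π ε (i + 1) < bval π ε i)).card

/-- number of descents at odd positions `i ∈ {0,…,n-1}` of a signed permutation -/
def bdes1 {n : ℕ} (π : Equiv.Perm (Fin n)) (ε : Fin n → Bool) : ℕ :=
  ((Finset.range n).filter (fun i => i % 2 = 1 ∧ bval π ε (i + 1) < bval π ε i)).card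

/-- number of ascents at even positions `i ∈ {0,…,n-1}` of a signed permutation -/
def basc0 {n : ℕ} (π : Equiv.Perm (Fin n)) (ε : Fin n → Bool) : ℕ :=
  ((Finset.range n).filter (fun i => i % 2 = 0 ∧ bval π ε i < bval π ε (i + 1))).card

/-- number of ascents at odd positions `i ∈ {0,…,n-1}` of a signed permutation -/
def basc1 {n : ℕ} (π : Equiv.Perm (Fin n)) (ε : Fin n → Bool) : ℕ :=
  ((Finset.range n).filter (fun i => i % 2 = 1 ∧ bval π ε i < bval π ε (i + 1))).card

/-- the value at (1-based) position `k` of the unsigned permutation `u` of `[n]`,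
with the convention `u 0 = 0`. -/
def uval {n : ℕ} (u : Equiv.Perm (Fin n)) (k : ℕ) : ℕ :=
  if h : 1 ≤ k ∧ k ≤ n then ((u ⟨k - 1, by omega⟩ : Fin n) : ℕ) + 1 else 0

/-- the number of left peaks of `u`: indices `1 ≤ i < n` with `u(i-1) < u(i) > u(i+1)`,
with the convention `u 0 = 0`. -/
def lpk {n : ℕ} (u : Equiv.Perm (Fin n)) : ℕ :=
  ((Finset.Ico 1 n).filter
    (fun i => uval u (i - 1) < uval u i ∧ uval u (i + 1) < uval u i)).card

/-- the type B descent number: descents at positions `0,…,n-1` (with prepended `0`) -/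
def bdes {n : ℕ} (π : Equiv.Perm (Fin n)) (ε : Fin n → Bool) : ℕ :=
  ((Finset.range n).filter (fun i => bval π ε (i + 1) < bval π ε i)).card

/-- number of permutations of `[n]` with exactly `j` left peaks -/
noncomputable def g (n j : ℕ) : ℕ :=
  Nat.card {u : Equiv.Perm (Fin n) // lpk u = j}

namespace Pf

def shift (c : ℕ → Bool) : ℕ → Bool := fun i => c (i + 1)

/-- signed descent at position `i`, where the left sign at position 0 is `s`,
signs are `ε`, and `c i` says whether the unsigned word descends from pos `i` to `i+1`. -/
def desb (c : ℕ → Bool) (s : Bool) (ε : ℕ → Bool) (i : ℕ) : Bool :=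
  if (if i = 0 then s else ε (i - 1)) then ε i && !(c i) else (ε i || c i)

def dcnt (n : ℕ) (c : ℕ → Bool) (s : Bool) (ε : ℕ → Bool) : ℕ :=
  ((Finset.range n).filter (fun i => desb c s ε i = true)).card

noncomputable def G (n : ℕ) (c : ℕ → Bool) (s : Bool) (x : ℝ) : ℝ :=
  ∑ ε : Fin n → Bool, x ^ dcnt n c s (fun i => if h : i < n then ε ⟨i, h⟩ else false)

def pk : ℕ → (ℕ → Bool) → ℕ
  | 0, _ => 0
  | 1, _ => 0
  | (n+2), c => (if c 1 = true ∧ c 0 = false then 1 else 0) + pk (n+1) (shift c)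

lemma desb_succ (c : ℕ → Bool) (s : Bool) (ε : ℕ → Bool) (i : ℕ) :
    desb c s ε (i + 1) = desb (shift c) (ε 0) (shift ε) i := by
  cases i with
  | zero => simp [desb, shift]
  | succ j => simp [desb, shift]

lemma dcnt_succ (n : ℕ) (c : ℕ → Bool) (s : Bool) (ε : ℕ → Bool) :
    dcnt (n+1) c s ε = (if desb c s ε 0 = true then 1 else 0)
      + dcnt n (shift c) (ε 0) (shift ε) := by
  unfold dcnt
  rw [Finset.card_filter, Finset.card_filter, Finset.sum_range_succ']
  rw [add_comm]
  congr 1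
  apply Finset.sum_congr rfl
  intro i _
  rw [desb_succ]

lemma G_zero (c : ℕ → Bool) (s : Bool) (x : ℝ) : G 0 c s x = 1 := by
  unfold G dcnt
  simp

lemma ext_cons_zero (n : ℕ) (b : Bool) (ε : Fin n → Bool) :
    (if h : (0:ℕ) < n + 1 then (Fin.cons b ε : Fin (n+1) → Bool) ⟨0, h⟩ else false) = b := by
  simp

lemma ext_cons_shift (n : ℕ) (b : Bool) (ε : Fin n → Bool) :
    shift (fun i => if h : i < n + 1 then (Fin.cons b ε : Fin (n+1) → Bool) ⟨i, h⟩ else false)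
      = fun i => if h : i < n then ε ⟨i, h⟩ else false := by
  funext i
  simp only [shift]
  by_cases h : i < n
  · rw [dif_pos (by omega : i + 1 < n + 1), dif_pos h]
    exact Fin.cons_succ (α := fun _ => Bool) b ε ⟨i, h⟩
  · rw [dif_neg (by omega), dif_neg h]

lemma G_succ (n : ℕ) (c : ℕ → Bool) (s : Bool) (x : ℝ) :
    G (n+1) c s x = ∑ b : Bool,
      x ^ (if (if s then b && !(c 0) else (b || c 0)) = true then 1 else 0)
        * G n (shift c) b x := by
  unfold G
  rw [← Equiv.sum_comp (Fin.consEquiv (fun _ : Fin (n+1) => Bool))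
    (fun ε : Fin (n+1) → Bool => x ^ dcnt (n+1) c s (fun i => if h : i < n + 1 then ε ⟨i, h⟩ else false))]
  rw [Fintype.sum_prod_type]
  apply Finset.sum_congr rfl
  intro b _
  rw [Finset.mul_sum]
  apply Finset.sum_congr rfl
  intro ε _
  show x ^ dcnt (n+1) c s (fun i => if h : i < n + 1 then (Fin.cons b ε : Fin (n+1) → Bool) ⟨i, h⟩ else false) = _
  rw [dcnt_succ, ext_cons_zero, ext_cons_shift, pow_add]
  congr 2

lemma pk_succ (n : ℕ) (hn : 1 ≤ n) (c : ℕ → Bool) :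
    pk (n+1) c = (if c 1 = true ∧ c 0 = false then 1 else 0) + pk n (shift c) := by
  cases n with
  | zero => omega
  | succ m => rfl
lemma G_closed (n : ℕ) (hn : 1 ≤ n) (c : ℕ → Bool) (s : Bool) (x : ℝ) :
    (c 0 = false → 2 * pk n c ≤ n ∧
      G n c s x = (4*x) ^ pk n c * (1+x) ^ (n - 2 * pk n c)) ∧
    (c 0 = true → 2 * pk n c + 1 ≤ n ∧
      G n c s x = (if s then 2 else 2*x) * (4*x) ^ pk n c * (1+x) ^ (n - 1 - 2 * pk n c)) := by
  induction n, hn using Nat.le_induction generalizing c s with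
  | base =>
    have h1 : G 1 c s x = ∑ b : Bool,
        x ^ (if (if s then b && !(c 0) else (b || c 0)) = true then 1 else 0)
          * G 0 (shift c) b x := G_succ 0 c s x
    rw [Fintype.sum_bool, G_zero, G_zero] at h1
    have hpk : pk 1 c = 0 := rfl
    constructor
    · intro hc0
      refine ⟨by omega, ?_⟩
      rw [h1, hpk, hc0]
      cases s <;> simp <;> ring
    · intro hc0
      refine ⟨by omega, ?_⟩
      rw [h1, hpk, hc0]
      cases s <;> simp <;> ring
  | succ n hn ih =>
    have hrec := G_succ n c s x
    rw [Fintype.sum_bool] at hrec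
    have hpk := pk_succ n hn c
    have hc1 : shift c 0 = c 1 := rfl
    constructor
    · intro hc0
      rcases hcc : c 1 with _ | _
      · -- c 1 = false : both G n (shift c) b have asc form
        have hT := fun b => ((ih (shift c) b).1 (by rw [hc1, hcc]))
        have hb : 2 * pk n (shift c) ≤ n := (hT false).1
        have hpk' : pk (n+1) c = pk n (shift c) := by
          rw [hpk, hcc]; simp
        refine ⟨by omega, ?_⟩
        rw [hrec, (hT true).2, (hT false).2, hc0, hpk']
        have he : n + 1 - 2 * pk n (shift c) = (n - 2 * pk n (shift c)) + 1 := by omega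
        rw [he, pow_succ]
        cases s <;> simp <;> ring
      · -- c 1 = true
        have hT := fun b => ((ih (shift c) b).2 (by rw [hc1, hcc]))
        have hb : 2 * pk n (shift c) + 1 ≤ n := (hT false).1
        have hpk' : pk (n+1) c = pk n (shift c) + 1 := by
          rw [hpk, hcc, hc0]; simp [add_comm]
        refine ⟨by omega, ?_⟩
        rw [hrec, (hT true).2, (hT false).2, hc0, hpk']
        have he : n + 1 - 2 * (pk n (shift c) + 1) = n - 1 - 2 * pk n (shift c) := by omega
        rw [he, pow_succ]
        cases s <;> simp <;> ring
    · intro hc0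
      rcases hcc : c 1 with _ | _
      · have hT := fun b => ((ih (shift c) b).1 (by rw [hc1, hcc]))
        have hb : 2 * pk n (shift c) ≤ n := (hT false).1
        have hpk' : pk (n+1) c = pk n (shift c) := by
          rw [hpk, hc0]; simp
        refine ⟨by omega, ?_⟩
        rw [hrec, (hT true).2, (hT false).2, hc0, hpk']
        have he : n + 1 - 1 - 2 * pk n (shift c) = n - 2 * pk n (shift c) := by omega
        rw [he]
        cases s <;> simp <;> ring
      · have hT := fun b => ((ih (shift c) b).2 (by rw [hc1, hcc]))
        have hb : 2 * pk n (shift c) + 1 ≤ n := (hT false).1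
        have hpk' : pk (n+1) c = pk n (shift c) := by
          rw [hpk, hc0]; simp
        refine ⟨by omega, ?_⟩
        rw [hrec, (hT true).2, (hT false).2, hc0, hpk']
        have he : n + 1 - 1 - 2 * pk n (shift c) = (n - 1 - 2 * pk n (shift c)) + 1 := by omega
        rw [he, pow_succ]
        cases s <;> simp <;> ring
lemma pk_eq_card (n : ℕ) (c : ℕ → Bool) :
    pk n c = ((Finset.Ico 1 n).filter (fun i => c i = true ∧ c (i-1) = false)).card := by
  induction n generalizing c with
  | zero => simp [pk]
  | succ m ih =>
    cases m with
    | zero => simp [pk]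
    | succ k =>
      show (if c 1 = true ∧ c 0 = false then 1 else 0) + pk (k+1) (shift c) = _
      rw [ih (shift c)]
      rw [Finset.card_filter, Finset.card_filter]
      rw [Finset.sum_Ico_eq_sum_range, Finset.sum_Ico_eq_sum_range]
      simp only [Nat.add_sub_cancel]
      rw [Finset.sum_range_succ']
      have h2 : ∀ i : ℕ, (if shift c (1 + i) = true ∧ shift c (1 + i - 1) = false then (1:ℕ) else 0)
          = (if c (1 + (i+1)) = true ∧ c (1 + (i+1) - 1) = false then (1:ℕ) else 0) := by
        intro i
        have q1 : 1 + i + 1 = 1 + (i+1) := by omega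
        have q2 : 1 + i - 1 + 1 = 1 + (i+1) - 1 := by omega
        have e1 : shift c (1 + i) = c (1 + (i+1)) := by simp only [shift, q1]
        have e2 : shift c (1 + i - 1) = c (1 + (i+1) - 1) := by simp only [shift, q2]
        rw [e1, e2]
      simp only [h2]
      have h3 : (if c (1 + 0) = true ∧ c (1 + 0 - 1) = false then (1:ℕ) else 0)
          = (if c 1 = true ∧ c 0 = false then (1:ℕ) else 0) := by norm_num
      rw [h3]
      omega
def cpi {n : ℕ} (π : Equiv.Perm (Fin n)) : ℕ → Bool :=
  fun i => decide (uval π (i+1) < uval π i)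

lemma uval_zero {n : ℕ} (π : Equiv.Perm (Fin n)) : uval π 0 = 0 := by simp [uval]

lemma uval_pos {n : ℕ} (π : Equiv.Perm (Fin n)) {i : ℕ} (h1 : 1 ≤ i) (h2 : i ≤ n) :
    1 ≤ uval π i := by
  unfold uval; rw [dif_pos ⟨h1, h2⟩]; omega

lemma cpi_zero {n : ℕ} (π : Equiv.Perm (Fin n)) : cpi π 0 = false := by
  simp [cpi, uval_zero]

lemma uval_ne {n : ℕ} (π : Equiv.Perm (Fin n)) {i : ℕ} (h1 : 1 ≤ i) (h2 : i + 1 ≤ n) :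
    uval π i ≠ uval π (i+1) := by
  unfold uval
  rw [dif_pos ⟨h1, by omega⟩, dif_pos ⟨by omega, h2⟩]
  intro h
  have hv : (π ⟨i - 1, by omega⟩ : Fin n) = π ⟨i + 1 - 1, by omega⟩ := by
    apply Fin.val_injective; omega
  have := π.injective hv
  rw [Fin.mk.injEq] at this
  omega

lemma lpk_eq {n : ℕ} (π : Equiv.Perm (Fin n)) : lpk π = pk n (cpi π) := by
  rw [pk_eq_card]
  unfold lpk
  apply congrArg Finset.card
  apply Finset.filter_congr
  intro i hi
  simp only [Finset.mem_Ico] at hi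
  have hc : (cpi π i = true) ↔ uval π (i+1) < uval π i := by simp [cpi]
  have hq : i - 1 + 1 = i := by omega
  have hc' : (cpi π (i-1) = false) ↔ ¬ (uval π i < uval π (i-1)) := by
    simp [cpi, hq]
  rw [hc, hc']
  by_cases h1 : i = 1
  · subst h1
    have h0 : uval π 0 = 0 := uval_zero π
    have hp : 1 ≤ uval π 1 := uval_pos π (by omega) (by omega)
    norm_num [h0]
    omega
  · have hne : uval π (i-1) ≠ uval π i := by
      have := uval_ne π (i := i - 1) (by omega) (by omega)
      rwa [hq] at this
    omega

lemma bval_zero {n : ℕ} (π : Equiv.Perm (Fin n)) (ε : Fin n → Bool) : bval π ε 0 = 0 := by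
  simp [bval]

lemma bval_spec {n : ℕ} (π : Equiv.Perm (Fin n)) (ε : Fin n → Bool) {i : ℕ}
    (h1 : 1 ≤ i) (h2 : i ≤ n) :
    bval π ε i = if ε ⟨i-1, by omega⟩ then -(uval π i : ℤ) else (uval π i : ℤ) := by
  unfold bval uval
  rw [dif_pos ⟨h1, h2⟩, dif_pos ⟨h1, h2⟩]
  split <;> push_cast <;> ring

lemma desb_succ_eval (c : ℕ → Bool) (s : Bool) (ε : ℕ → Bool) (j : ℕ) :
    desb c s ε (j+1) = if ε j then ε (j+1) && !(c (j+1)) else (ε (j+1) || c (j+1)) := by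
  simp [desb]

lemma bdes_eq {n : ℕ} (π : Equiv.Perm (Fin n)) (ε : Fin n → Bool) :
    bdes π ε = dcnt n (cpi π) false (fun i => if h : i < n then ε ⟨i, h⟩ else false) := by
  unfold bdes dcnt
  apply congrArg Finset.card
  apply Finset.filter_congr
  intro i hi
  simp only [Finset.mem_range] at hi
  cases i with
  | zero =>
    have hb0 : bval π ε 0 = 0 := bval_zero π ε
    have hb1 : bval π ε 1 = if ε ⟨0, by omega⟩ then -(uval π 1 : ℤ) else (uval π 1 : ℤ) :=
      bval_spec π ε (by omega) (by omega)
    have hp : 1 ≤ uval π 1 := uval_pos π (by omega) (by omega)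
    simp only [desb, if_pos rfl, cpi_zero, Bool.or_false, hb0, hb1]
    rw [dif_pos hi]
    rcases h : ε ⟨0, hi⟩ <;> simp [h] <;> omega
  | succ j =>
    have hb1 : bval π ε (j+1) = if ε ⟨j, by omega⟩ then -(uval π (j+1) : ℤ) else (uval π (j+1) : ℤ) :=
      bval_spec π ε (by omega) (by omega)
    have hb2 : bval π ε (j+2) = if ε ⟨j+1, by omega⟩ then -(uval π (j+2) : ℤ) else (uval π (j+2) : ℤ) :=
      bval_spec π ε (by omega) (by omega)
    have hne : uval π (j+1) ≠ uval π (j+2) := uval_ne π (by omega) (by omega)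
    have hp1 : 1 ≤ uval π (j+1) := uval_pos π (by omega) (by omega)
    have hp2 : 1 ≤ uval π (j+2) := uval_pos π (by omega) (by omega)
    have hEj : (if h : j < n then ε ⟨j, h⟩ else false) = ε ⟨j, by omega⟩ :=
      dif_pos (by omega)
    have hEj1 : (if h : j + 1 < n then ε ⟨j+1, h⟩ else false) = ε ⟨j+1, hi⟩ := dif_pos hi
    have hcp : cpi π (j+1) = decide (uval π (j+2) < uval π (j+1)) := rfl
    simp only [desb_succ_eval, hEj, hEj1, hb1, hb2]
    rcases h1 : ε ⟨j, by omega⟩ <;> rcases h2 : ε ⟨j+1, hi⟩ <;>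
      simp [h1, h2, hcp] <;> omega

lemma inner {n : ℕ} (π : Equiv.Perm (Fin n)) (x : ℝ) :
    2 * lpk π ≤ n ∧
    (∑ ε : Fin n → Bool, x ^ bdes π ε) = (4*x) ^ lpk π * (1+x) ^ (n - 2 * lpk π) := by
  have hG : (∑ ε : Fin n → Bool, x ^ bdes π ε) = G n (cpi π) false x := by
    unfold G
    apply Finset.sum_congr rfl
    intro ε _
    rw [bdes_eq]
  cases n with
  | zero =>
    have hl : lpk π = 0 := by simp [lpk]
    refine ⟨by omega, ?_⟩
    rw [hG, G_zero, hl]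
    simp
  | succ m =>
    have h := (G_closed (m+1) (by omega) (cpi π) false x).1 (cpi_zero π)
    rw [lpk_eq]
    exact ⟨h.1, by rw [hG, h.2]⟩

end Pf

/-- Petersen's gamma-expansion of the type B Eulerian polynomial. -/
theorem stmt18 (n : ℕ) (x : ℝ) :
    (∑ p : Equiv.Perm (Fin n) × (Fin n → Bool), x ^ bdes p.1 p.2) =
      ∑ j ∈ Finset.range (n / 2 + 1),
        (g n j : ℝ) * (4 * x) ^ j * (1 + x) ^ (n - 2 * j) := by
  classical
  rw [Fintype.sum_prod_type]
  have hin : ∀ π : Equiv.Perm (Fin n),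
      (∑ ε : Fin n → Bool, x ^ bdes π ε) = (4*x) ^ lpk π * (1+x) ^ (n - 2 * lpk π) :=
    fun π => (Pf.inner π x).2
  rw [Finset.sum_congr rfl (fun π _ => hin π)]
  have hmaps : ∀ π ∈ (Finset.univ : Finset (Equiv.Perm (Fin n))),
      lpk π ∈ Finset.range (n / 2 + 1) := by
    intro π _
    have := (Pf.inner π x).1
    simp only [Finset.mem_range]
    omega
  rw [← Finset.sum_fiberwise_of_maps_to hmaps
    (fun π => (4*x) ^ lpk π * (1+x) ^ (n - 2 * lpk π))]
  apply Finset.sum_congr rfl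
  intro j _
  have hfb : ∀ π ∈ Finset.univ.filter (fun π : Equiv.Perm (Fin n) => lpk π = j),
      (4*x) ^ lpk π * (1+x) ^ (n - 2 * lpk π) = (4*x) ^ j * (1+x) ^ (n - 2 * j) := by
    intro π hπ
    rw [Finset.mem_filter] at hπ
    rw [hπ.2]
  rw [Finset.sum_congr rfl hfb, Finset.sum_const, nsmul_eq_mul]
  have hg : (Finset.univ.filter (fun π : Equiv.Perm (Fin n) => lpk π = j)).card = g n j := by
    rw [g, Nat.card_eq_fintype_card, Fintype.card_subtype]
  rw [hg]
  ring
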